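/- arXiv:2003.01880 — 9 statements merged into one kernel-verified Lean document; each statement's English description precedes it below -/
import Mathlib

section
/- If an averaged operator T : E → E on a finite-dimensional real inner product space E has a nonempty fixed point set, and a sequence {x^k} with arbitrary initial iterate x^1 ∈ E satisfies x^{k+1} = T(x^k) for all k ∈ ℕ, then there exists a fixed point x* ∈ Fix(T) such that x^k → x*. -/
open Filter

lemma km_combo {E : Type*} [NormedAddCommGroup E] [InnerProductSpace ℝ E]
    (t : ℝ) (a b : E) :
    ‖(1 - t) • a + t • b‖ ^ 2
      = (1 - t) * ‖a‖ ^ 2 + t * ‖b‖ ^ 2 - t * (1 - t) * ‖a - b‖ ^ 2 := by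
  simp only [← real_inner_self_eq_norm_sq, inner_add_add_self, inner_sub_sub_self,
    real_inner_smul_left, real_inner_smul_right]
  ring

/-- **Krasnosel'skiĭ–Mann convergence.** If an averaged operator `T : E → E` on a
finite-dimensional real inner product space has a nonempty fixed point set and a
sequence `{x^k}` with arbitrary initial iterate satisfies `x^{k+1} = T (x^k)` for
all `k`, then there is a fixed point `x*` of `T` with `x^k → x*`. -/
theorem km_iteration_converges
    {E : Type*} [NormedAddCommGroup E] [InnerProductSpace ℝ E] [FiniteDimensional ℝ E]
    (T : E → E)
    (havg : ∃ τ ∈ Set.Ioo (0 : ℝ) 1, ∃ Q : E → E,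
      (∀ a b : E, ‖Q a - Q b‖ ≤ ‖a - b‖) ∧ ∀ z : E, T z = (1 - τ) • z + τ • Q z)
    (hfix : ∃ z : E, T z = z)
    (x : ℕ → E)
    (hiter : ∀ k : ℕ, x (k + 1) = T (x k)) :
    ∃ xstar : E, T xstar = xstar ∧ Filter.Tendsto x Filter.atTop (nhds xstar) := by
  obtain ⟨τ, ⟨hτ0, hτ1⟩, Q, hQ, hT⟩ := havg
  obtain ⟨z, hz⟩ := hfix
  -- T is nonexpansive
  have hTne : ∀ a b : E, ‖T a - T b‖ ≤ ‖a - b‖ := by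
    intro a b
    have : T a - T b = (1 - τ) • (a - b) + τ • (Q a - Q b) := by
      rw [hT a, hT b]; module
    rw [this]
    calc ‖(1 - τ) • (a - b) + τ • (Q a - Q b)‖
        ≤ ‖(1 - τ) • (a - b)‖ + ‖τ • (Q a - Q b)‖ := norm_add_le _ _
      _ = (1 - τ) * ‖a - b‖ + τ * ‖Q a - Q b‖ := by
          rw [norm_smul, norm_smul, Real.norm_eq_abs, Real.norm_eq_abs,
            abs_of_pos hτ0, abs_of_pos (by linarith)]
      _ ≤ (1 - τ) * ‖a - b‖ + τ * ‖a - b‖ := by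
          nlinarith [hQ a b]
      _ = ‖a - b‖ := by ring
  have hTcont : Continuous T := by
    have : LipschitzWith 1 T := by
      intro a b
      simp only [ENNReal.coe_one, one_mul, edist_dist, dist_eq_norm]
      exact ENNReal.ofReal_le_ofReal (hTne a b)
    exact this.continuous
  -- Q z = z
  have hQz : Q z = z := by
    have h1 : τ • Q z = τ • z := by
      have h0 := hT z
      rw [hz] at h0
      have h2 : (1 - τ) • z + τ • Q z = (1 - τ) • z + τ • z := by
        rw [← h0]; module
      exact add_left_cancel h2
    exact smul_right_injective E (ne_of_gt hτ0) h1
  -- key inequality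
  have key : ∀ k, ‖x (k + 1) - z‖ ^ 2
      ≤ ‖x k - z‖ ^ 2 - τ * (1 - τ) * ‖x k - Q (x k)‖ ^ 2 := by
    intro k
    have hrw : x (k + 1) - z = (1 - τ) • (x k - z) + τ • (Q (x k) - z) := by
      rw [hiter k, hT (x k)]; module
    have hd : (x k - z) - (Q (x k) - z) = x k - Q (x k) := by abel
    have hb : ‖Q (x k) - z‖ ≤ ‖x k - z‖ := by
      have := hQ (x k) z; rwa [hQz] at this
    have hb2 : ‖Q (x k) - z‖ ^ 2 ≤ ‖x k - z‖ ^ 2 := by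
      nlinarith [norm_nonneg (Q (x k) - z)]
    have hb3 : τ * ‖Q (x k) - z‖ ^ 2 ≤ τ * ‖x k - z‖ ^ 2 :=
      mul_le_mul_of_nonneg_left hb2 hτ0.le
    rw [hrw, km_combo, hd]
    linarith
  -- Fejér monotonicity for any fixed point
  have fej : ∀ w : E, T w = w → ∀ k m : ℕ, k ≤ m → ‖x m - w‖ ≤ ‖x k - w‖ := by
    intro w hw k m hkm
    induction m with
    | zero => simp_all
    | succ n ih =>
      rcases Nat.lt_or_ge k (n + 1) with h | h
      · have h1 : ‖x (n + 1) - w‖ ≤ ‖x n - w‖ := by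
          rw [hiter n]
          conv_lhs => rw [← hw]
          exact hTne (x n) w
        exact h1.trans (ih (Nat.lt_succ_iff.mp h))
      · have : k = n + 1 := le_antisymm hkm h
        simp [this]
  -- residuals tend to 0
  have hsq : ∀ n : ℕ, ∑ k ∈ Finset.range n, τ * (1 - τ) * ‖x k - Q (x k)‖ ^ 2
      ≤ ‖x 0 - z‖ ^ 2 := by
    intro n
    have htel : ∀ n : ℕ, ∑ k ∈ Finset.range n, τ * (1 - τ) * ‖x k - Q (x k)‖ ^ 2
        ≤ ‖x 0 - z‖ ^ 2 - ‖x n - z‖ ^ 2 := by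
      intro n
      induction n with
      | zero => simp
      | succ m ih =>
        rw [Finset.sum_range_succ]
        have := key m
        linarith
    have := htel n
    nlinarith [norm_nonneg (x n - z)]
  have hc : (0:ℝ) < τ * (1 - τ) := by nlinarith
  have hsummable : Summable (fun k => τ * (1 - τ) * ‖x k - Q (x k)‖ ^ 2) := by
    exact summable_of_sum_range_le
      (fun k => mul_nonneg hc.le (by positivity)) hsq
  have hres2 : Tendsto (fun k => τ * (1 - τ) * ‖x k - Q (x k)‖ ^ 2) atTop (nhds 0) :=
    hsummable.tendsto_atTop_zero
  have hres : Tendsto (fun k => ‖x k - Q (x k)‖) atTop (nhds 0) := by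
    have h1 : Tendsto (fun k => ‖x k - Q (x k)‖ ^ 2) atTop (nhds 0) := by
      have := hres2.const_mul (τ * (1 - τ))⁻¹
      simp only [mul_zero] at this
      convert this using 2 with k
      field_simp
    have h2 : Tendsto (fun k => Real.sqrt (‖x k - Q (x k)‖ ^ 2)) atTop (nhds 0) := by
      simpa [Function.comp_def, Real.sqrt_zero]
        using (Real.continuous_sqrt.tendsto 0).comp h1
    convert h2 using 2 with k
    rw [Real.sqrt_sq (norm_nonneg _)]
  -- x k - T (x k) → 0
  have hAR : Tendsto (fun k => x k - T (x k)) atTop (nhds 0) := by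
    have : ∀ k, x k - T (x k) = τ • (x k - Q (x k)) := by
      intro k; rw [hT (x k)]; module
    simp only [this]
    rw [tendsto_zero_iff_norm_tendsto_zero]
    simp only [norm_smul, Real.norm_eq_abs, abs_of_pos hτ0]
    have := hres.const_mul τ
    simpa using this
  -- bounded sequence, convergent subsequence
  have hmem : ∀ k, x k ∈ Metric.closedBall z (‖x 0 - z‖) := by
    intro k
    simp only [Metric.mem_closedBall, dist_eq_norm]
    exact fej z hz 0 k (Nat.zero_le k)
  obtain ⟨xstar, -, φ, hφ, hconv⟩ :=
    tendsto_subseq_of_bounded Metric.isBounded_closedBall hmem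
  -- xstar is a fixed point
  have hTx : T xstar = xstar := by
    have h1 : Tendsto (fun j => T (x (φ j))) atTop (nhds (T xstar)) :=
      (hTcont.tendsto xstar).comp hconv
    have h2 : Tendsto (fun j => x (φ j) - T (x (φ j))) atTop (nhds 0) :=
      hAR.comp hφ.tendsto_atTop
    have h3 : Tendsto (fun j => x (φ j) - (x (φ j) - T (x (φ j)))) atTop
        (nhds (xstar - 0)) := hconv.sub h2
    simp only [sub_sub_cancel, sub_zero] at h3
    exact tendsto_nhds_unique h1 h3
  refine ⟨xstar, hTx, ?_⟩
  rw [Metric.tendsto_atTop]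
  intro ε hε
  have : Tendsto (fun j => dist (x (φ j)) xstar) atTop (nhds 0) :=
    tendsto_iff_dist_tendsto_zero.mp hconv
  obtain ⟨j, hj⟩ := (this.eventually (gt_mem_nhds hε)).exists
  refine ⟨φ j, fun k hk => ?_⟩
  have := fej xstar hTx (φ j) k hk
  rw [dist_eq_norm] at *
  linarith
end

section
/- Let T : E → E be averaged with Fix(T) ≠ ∅ and Id − T coercive. Fix α ∈ [0,1), sequences {y^k} ⊆ E, {x^k} ⊆ E and nonnegative reals {μ_k} such that for every k: x^{k+1} = y^k if ‖y^k − T(y^k)‖ ≤ α μ_k, and x^{k+1} = T(x^k) otherwise. Assume the safeguard rule: if the inequality ‖y^k − T(y^k)‖ ≤ α μ_k holds for infinitely many k, then μ_k → 0. Then dist(x^k, Fix(T)) → 0 as k → ∞, i.e., the sequence {x^k} approaches the fixed point set. -/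
/-- **Safe-L2O convergence to the solution set.** Let `T` be averaged with
`Fix T ≠ ∅` and `Id - T` coercive. Fix `α ∈ [0,1)`, sequences `{y^k}, {x^k} ⊆ E` and
nonnegative reals `{μ_k}` such that `x^{k+1} = y^k` when `‖y^k - T y^k‖ ≤ α μ_k`, and
`x^{k+1} = T (x^k)` otherwise. If the safeguard rule holds (whenever the inequality
holds infinitely often, `μ_k → 0`), then `dist(x^k, Fix T) → 0`. -/
theorem safe_l2o_dist_to_fix_tendsto_zero
    {E : Type*} [NormedAddCommGroup E] [InnerProductSpace ℝ E] [FiniteDimensional ℝ E]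
    (T : E → E)
    (havg : ∃ τ ∈ Set.Ioo (0 : ℝ) 1, ∃ Q : E → E,
      (∀ a b : E, ‖Q a - Q b‖ ≤ ‖a - b‖) ∧ ∀ z : E, T z = (1 - τ) • z + τ • Q z)
    (hfix : ∃ z : E, T z = z)
    (hcoer : Filter.Tendsto (fun z : E => ‖z - T z‖)
      (Filter.comap norm Filter.atTop) Filter.atTop)
    (α : ℝ) (hα0 : 0 ≤ α) (hα1 : α < 1)
    (y x : ℕ → E) (μ : ℕ → ℝ) (hμ : ∀ k, 0 ≤ μ k)
    (hupd : ∀ k : ℕ,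
      (‖y k - T (y k)‖ ≤ α * μ k → x (k + 1) = y k) ∧
      (¬ ‖y k - T (y k)‖ ≤ α * μ k → x (k + 1) = T (x k)))
    (hsafe : {k : ℕ | ‖y k - T (y k)‖ ≤ α * μ k}.Infinite →
      Filter.Tendsto μ Filter.atTop (nhds 0)) :
    Filter.Tendsto (fun k : ℕ => Metric.infDist (x k) {z : E | T z = z})
      Filter.atTop (nhds 0) := by
  classical
  obtain ⟨τ, hτ, Q, hQ, hT⟩ := havg
  obtain ⟨z0, hz0⟩ := hfix
  have hτ0 : 0 < τ := hτ.1
  have hτ1 : τ < 1 := hτ.2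
  -- T is nonexpansive
  have hne : ∀ a b : E, ‖T a - T b‖ ≤ ‖a - b‖ := by
    intro a b
    have h1 : T a - T b = (1 - τ) • (a - b) + τ • (Q a - Q b) := by
      rw [hT a, hT b]; module
    rw [h1]
    calc ‖(1 - τ) • (a - b) + τ • (Q a - Q b)‖
        ≤ ‖(1 - τ) • (a - b)‖ + ‖τ • (Q a - Q b)‖ := norm_add_le _ _
      _ = (1 - τ) * ‖a - b‖ + τ * ‖Q a - Q b‖ := by
          rw [norm_smul, norm_smul, Real.norm_of_nonneg (by linarith),
            Real.norm_of_nonneg hτ0.le]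
      _ ≤ (1 - τ) * ‖a - b‖ + τ * ‖a - b‖ := by nlinarith [hQ a b]
      _ = ‖a - b‖ := by ring
  -- Q fixes z0
  have hQz0 : Q z0 = z0 := by
    have h1 : (1 - τ) • z0 + τ • Q z0 = z0 := by rw [← hT z0, hz0]
    have h2 : τ • Q z0 = τ • z0 := by
      have h4 : τ • Q z0 = z0 - (1 - τ) • z0 := eq_sub_of_add_eq' h1
      rw [h4, sub_smul, one_smul]
      abel
    exact smul_right_injective E (ne_of_gt hτ0) h2
  -- key convexity identity
  have key : ∀ a b : E, ‖(1 - τ) • a + τ • b‖ ^ 2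
      = (1 - τ) * ‖a‖ ^ 2 + τ * ‖b‖ ^ 2 - τ * (1 - τ) * ‖a - b‖ ^ 2 := by
    intro a b
    rw [@norm_add_sq_real, @norm_sub_sq_real, norm_smul, norm_smul,
      real_inner_smul_left, real_inner_smul_right,
      Real.norm_of_nonneg (by linarith : (0:ℝ) ≤ 1 - τ), Real.norm_of_nonneg hτ0.le]
    ring
  -- Fejér inequality
  have hfej : ∀ w : E,
      ‖T w - z0‖ ^ 2 ≤ ‖w - z0‖ ^ 2 - ((1 - τ) / τ) * ‖w - T w‖ ^ 2 := by
    intro w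
    have h1 : T w - z0 = (1 - τ) • (w - z0) + τ • (Q w - z0) := by rw [hT w]; module
    have h2 : w - T w = τ • ((w - z0) - (Q w - z0)) := by rw [hT w]; module
    have h3 : ‖w - T w‖ ^ 2 = τ ^ 2 * ‖(w - z0) - (Q w - z0)‖ ^ 2 := by
      rw [h2, norm_smul, Real.norm_of_nonneg hτ0.le]; ring
    have h4 : ‖Q w - z0‖ ≤ ‖w - z0‖ := by
      have := hQ w z0; rwa [hQz0] at this
    have h5 := key (w - z0) (Q w - z0)
    have hτne : τ ≠ 0 := ne_of_gt hτ0
    have h6 : (1 - τ) / τ * (τ ^ 2 * ‖(w - z0) - (Q w - z0)‖ ^ 2)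
        = τ * (1 - τ) * ‖(w - z0) - (Q w - z0)‖ ^ 2 := by
      field_simp
    have h7 : ‖Q w - z0‖ ^ 2 ≤ ‖w - z0‖ ^ 2 :=
      pow_le_pow_left₀ (norm_nonneg _) h4 2
    have h8 : τ * ‖Q w - z0‖ ^ 2 ≤ τ * ‖w - z0‖ ^ 2 :=
      mul_le_mul_of_nonneg_left h7 hτ0.le
    rw [h1, h5, h3, h6]
    linarith
  set r : ℕ → ℝ := fun k => ‖x k - T (x k)‖ with hrdef
  have hrnn : ∀ k, 0 ≤ r k := fun k => norm_nonneg _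
  have hrstep : ∀ k, ¬ (‖y k - T (y k)‖ ≤ α * μ k) → r (k + 1) ≤ r k := by
    intro k hk
    have hx := (hupd k).2 hk
    show ‖x (k + 1) - T (x (k + 1))‖ ≤ ‖x k - T (x k)‖
    rw [hx]
    exact hne (x k) (T (x k))
  -- residuals tend to zero
  have hr0 : Filter.Tendsto r Filter.atTop (nhds 0) := by
    rw [Metric.tendsto_atTop]
    intro ε hε
    by_cases hS : {k : ℕ | ‖y k - T (y k)‖ ≤ α * μ k}.Infinite
    · have hμ0 := hsafe hS
      obtain ⟨M, hM⟩ : ∃ M, ∀ k ≥ M, μ k < ε / (α + 1) := by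
        obtain ⟨M, hM⟩ := Metric.tendsto_atTop.mp hμ0 (ε / (α + 1)) (by positivity)
        refine ⟨M, fun k hk => ?_⟩
        have := hM k hk
        rw [Real.dist_eq, sub_zero] at this
        exact lt_of_le_of_lt (le_abs_self _) this
      obtain ⟨k0, hk0S, hk0M⟩ := hS.exists_gt M
      have hαμ : ∀ k ≥ M, α * μ k < ε := by
        intro k hk
        have h1 : α * μ k ≤ α * (ε / (α + 1)) :=
          mul_le_mul_of_nonneg_left (hM k hk).le hα0
        have h2 : α * (ε / (α + 1)) < ε := by
          rw [mul_div_assoc', div_lt_iff₀ (by linarith : (0:ℝ) < α + 1)]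
          nlinarith
        linarith
      have main : ∀ n, r (k0 + 1 + n) < ε := by
        intro n
        induction n with
        | zero =>
          have hx := (hupd k0).1 hk0S
          show ‖x (k0 + 1 + 0) - T (x (k0 + 1 + 0))‖ < ε
          simp only [Nat.add_zero]
          rw [hx]
          exact lt_of_le_of_lt hk0S (hαμ k0 hk0M.le)
        | succ n ih =>
          have heq : k0 + 1 + (n + 1) = (k0 + 1 + n) + 1 := by omega
          rw [heq]
          by_cases hk : ‖y (k0 + 1 + n) - T (y (k0 + 1 + n))‖ ≤ α * μ (k0 + 1 + n)
          · have hx := (hupd (k0 + 1 + n)).1 hk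
            show ‖x ((k0 + 1 + n) + 1) - T (x ((k0 + 1 + n) + 1))‖ < ε
            rw [hx]
            exact lt_of_le_of_lt hk (hαμ _ (by omega))
          · exact lt_of_le_of_lt (hrstep _ hk) ih
      refine ⟨k0 + 1, fun k hk => ?_⟩
      rw [Real.dist_eq, sub_zero, abs_of_nonneg (hrnn k)]
      have heq : k = k0 + 1 + (k - (k0 + 1)) := by omega
      rw [heq]
      exact main _
    · rw [Set.not_infinite] at hS
      obtain ⟨N, hN⟩ : ∃ N, ∀ k ≥ N, ¬ ‖y k - T (y k)‖ ≤ α * μ k := by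
        obtain ⟨B, hB⟩ := hS.bddAbove
        refine ⟨B + 1, fun k hk hkS => ?_⟩
        have := hB hkS
        omega
      have hmono : ∀ j, N ≤ j → ∀ k, j ≤ k → r k ≤ r j := by
        intro j hj k hk
        induction k, hk using Nat.le_induction with
        | base => exact le_refl _
        | succ k hk ih =>
          exact le_trans (hrstep k (hN k (by omega))) ih
      have hdec : ∀ k, N ≤ k →
          ‖x (k + 1) - z0‖ ^ 2 ≤ ‖x k - z0‖ ^ 2 - ((1 - τ) / τ) * (r k) ^ 2 := by
        intro k hk
        have hx := (hupd k).2 (hN k hk)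
        have : r k = ‖x k - T (x k)‖ := rfl
        rw [hx, this]
        exact hfej (x k)
      have hc : 0 < (1 - τ) / τ := div_pos (by linarith) hτ0
      by_cases hex : ∃ K, N ≤ K ∧ r K < ε
      · obtain ⟨K, hKN, hKε⟩ := hex
        refine ⟨K, fun k hk => ?_⟩
        rw [Real.dist_eq, sub_zero, abs_of_nonneg (hrnn k)]
        exact lt_of_le_of_lt (hmono K hKN k hk) hKε
      · exfalso
        push_neg at hex
        have hall : ∀ k, N ≤ k → ε ≤ r k := hex
        have hsum : ∀ n : ℕ,
            ‖x (N + n) - z0‖ ^ 2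
              ≤ ‖x N - z0‖ ^ 2 - n * (((1 - τ) / τ) * ε ^ 2) := by
          intro n
          induction n with
          | zero => simp
          | succ n ih =>
            have h1 := hdec (N + n) (by omega)
            have h2 : ε ≤ r (N + n) := hall _ (by omega)
            have h3 : ((1 - τ) / τ) * ε ^ 2 ≤ ((1 - τ) / τ) * (r (N + n)) ^ 2 := by
              apply mul_le_mul_of_nonneg_left _ hc.le
              nlinarith [hrnn (N + n)]
            have heq : N + (n + 1) = (N + n) + 1 := by omega
            rw [heq]
            push_cast
            nlinarith
        obtain ⟨n, hn⟩ := exists_nat_gt (‖x N - z0‖ ^ 2 / (((1 - τ) / τ) * ε ^ 2))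
        have hpos : 0 < ((1 - τ) / τ) * ε ^ 2 := by positivity
        have h1 := hsum n
        have h2 : ‖x N - z0‖ ^ 2 < n * (((1 - τ) / τ) * ε ^ 2) := by
          rw [div_lt_iff₀ hpos] at hn
          linarith
        nlinarith [sq_nonneg ‖x (N + n) - z0‖]
  -- uniform bound on residuals
  obtain ⟨N1, hN1⟩ : ∃ N1, ∀ k ≥ N1, r k ≤ 1 := by
    obtain ⟨N1, h⟩ := Metric.tendsto_atTop.mp hr0 1 one_pos
    refine ⟨N1, fun k hk => ?_⟩
    have := h k hk
    rw [Real.dist_eq, sub_zero, abs_of_nonneg (hrnn k)] at this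
    linarith
  set C : ℝ := 1 + ∑ i ∈ Finset.range N1, r i with hC
  have hCb : ∀ k, r k ≤ C := by
    intro k
    rcases le_or_gt N1 k with h | h
    · have hs : 0 ≤ ∑ i ∈ Finset.range N1, r i :=
        Finset.sum_nonneg fun i _ => hrnn i
      have := hN1 k h
      rw [hC]; linarith
    · have h2 : r k ≤ ∑ i ∈ Finset.range N1, r i :=
        Finset.single_le_sum (fun i _ => hrnn i) (Finset.mem_range.mpr h)
      rw [hC]; linarith
  -- coercivity gives a bound on the iterates
  obtain ⟨R, hR⟩ : ∃ R : ℝ, ∀ z : E, R ≤ ‖z‖ → C + 1 ≤ ‖z - T z‖ := by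
    have h1 : ∀ᶠ z in Filter.comap norm Filter.atTop, C + 1 ≤ ‖z - T z‖ :=
      hcoer.eventually (Filter.eventually_ge_atTop (C + 1))
    rw [Filter.eventually_comap, Filter.eventually_atTop] at h1
    obtain ⟨R, hR⟩ := h1
    exact ⟨R, fun z hz => hR ‖z‖ hz z rfl⟩
  have hxR : ∀ k, ‖x k‖ ≤ R := by
    intro k
    by_contra h
    push_neg at h
    have h1 := hR (x k) h.le
    have h2 : ‖x k - T (x k)‖ ≤ C := hCb k
    linarith
  -- compactness argument
  have hTcont : Continuous T := by
    have h : LipschitzWith 1 T := LipschitzWith.of_dist_le_mul fun a b => by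
      rw [NNReal.coe_one, one_mul, dist_eq_norm, dist_eq_norm]
      exact hne a b
    exact h.continuous
  have hgcont : Continuous fun z : E => ‖z - T z‖ := (continuous_id.sub hTcont).norm
  have hK : IsCompact (Metric.closedBall (0 : E) R) := isCompact_closedBall _ _
  rw [Metric.tendsto_atTop]
  intro ε hε
  set Fix := {z : E | T z = z} with hFix
  set K' := Metric.closedBall (0 : E) R ∩ {z : E | ε ≤ Metric.infDist z Fix} with hK'
  have hK'c : IsCompact K' :=
    hK.inter_right (isClosed_le continuous_const (Metric.continuous_infDist_pt Fix))
  by_cases hKe : K'.Nonempty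
  · obtain ⟨w, hwK', hwmin⟩ := hK'c.exists_isMinOn hKe hgcont.continuousOn
    have hw1 : ε ≤ Metric.infDist w Fix := hwK'.2
    have hwpos : 0 < ‖w - T w‖ := by
      by_contra h
      push_neg at h
      have h0 : ‖w - T w‖ = 0 := le_antisymm h (norm_nonneg _)
      have h1 : T w = w := (sub_eq_zero.mp (norm_eq_zero.mp h0)).symm
      have hmem : w ∈ Fix := h1
      have h2 := Metric.infDist_zero_of_mem hmem
      rw [h2] at hw1
      linarith
    obtain ⟨N2, hN2⟩ := Metric.tendsto_atTop.mp hr0 ‖w - T w‖ hwpos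
    refine ⟨N2, fun k hk => ?_⟩
    rw [Real.dist_eq, sub_zero, abs_of_nonneg Metric.infDist_nonneg]
    by_contra hcon
    push_neg at hcon
    have hxK' : x k ∈ K' :=
      ⟨Metric.mem_closedBall.mpr (by rw [dist_zero_right]; exact hxR k), hcon⟩
    have h1 : ‖w - T w‖ ≤ ‖x k - T (x k)‖ := hwmin hxK'
    have h2 := hN2 k hk
    rw [Real.dist_eq, sub_zero, abs_of_nonneg (hrnn k)] at h2
    have h3 : r k = ‖x k - T (x k)‖ := rfl
    rw [h3] at h2
    linarith
  · refine ⟨0, fun k _ => ?_⟩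
    rw [Real.dist_eq, sub_zero, abs_of_nonneg Metric.infDist_nonneg]
    by_contra hcon
    push_neg at hcon
    exact hKe ⟨x k,
      Metric.mem_closedBall.mpr (by rw [dist_zero_right]; exact hxR k), hcon⟩
end

section
/- Let T : E → E be averaged with Fix(T) ≠ ∅ and Id − T coercive. Fix α ∈ [0,1), sequences {y^k} ⊆ E, {x^k} ⊆ E and nonnegative reals {μ_k} such that for every k: x^{k+1} = y^k if ‖y^k − T(y^k)‖ ≤ α μ_k, and x^{k+1} = T(x^k) otherwise; and assume that if ‖y^k − T(y^k)‖ ≤ α μ_k holds for infinitely many k then μ_k → 0. If the sequence {x^k} has exactly one cluster point x*, then x^k converges to x* and x* ∈ Fix(T). -/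
/-- **Safe-L2O convergence under a unique cluster point.** Under the Safe-L2O
hypotheses, if the iterate sequence `{x^k}` has exactly one cluster point `x*`,
then `x^k → x*` and `x*` is a fixed point of `T`. -/
theorem safe_l2o_unique_cluster_point_converges
    {E : Type*} [NormedAddCommGroup E] [InnerProductSpace ℝ E] [FiniteDimensional ℝ E]
    (T : E → E)
    (havg : ∃ τ ∈ Set.Ioo (0 : ℝ) 1, ∃ Q : E → E,
      (∀ a b : E, ‖Q a - Q b‖ ≤ ‖a - b‖) ∧ ∀ z : E, T z = (1 - τ) • z + τ • Q z)
    (hfix : ∃ z : E, T z = z)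
    (hcoer : Filter.Tendsto (fun z : E => ‖z - T z‖)
      (Filter.comap norm Filter.atTop) Filter.atTop)
    (α : ℝ) (hα0 : 0 ≤ α) (hα1 : α < 1)
    (y x : ℕ → E) (μ : ℕ → ℝ) (hμ : ∀ k, 0 ≤ μ k)
    (hupd : ∀ k : ℕ,
      (‖y k - T (y k)‖ ≤ α * μ k → x (k + 1) = y k) ∧
      (¬ ‖y k - T (y k)‖ ≤ α * μ k → x (k + 1) = T (x k)))
    (hsafe : {k : ℕ | ‖y k - T (y k)‖ ≤ α * μ k}.Infinite →
      Filter.Tendsto μ Filter.atTop (nhds 0))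
    (xstar : E)
    (hcluster : MapClusterPt xstar Filter.atTop x)
    (huniq : ∀ p : E, MapClusterPt p Filter.atTop x → p = xstar) :
    Filter.Tendsto x Filter.atTop (nhds xstar) ∧ T xstar = xstar := by
  classical
  obtain ⟨τ, hτ, Q, hQ, hT⟩ := havg
  obtain ⟨z, hz⟩ := hfix
  -- T is nonexpansive
  have hne : ∀ a b : E, ‖T a - T b‖ ≤ ‖a - b‖ := by
    intro a b
    have : T a - T b = (1 - τ) • (a - b) + τ • (Q a - Q b) := by
      rw [hT a, hT b]; module
    rw [this]
    calc ‖(1 - τ) • (a - b) + τ • (Q a - Q b)‖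
        ≤ ‖(1 - τ) • (a - b)‖ + ‖τ • (Q a - Q b)‖ := norm_add_le _ _
      _ = (1 - τ) * ‖a - b‖ + τ * ‖Q a - Q b‖ := by
          rw [norm_smul, norm_smul, Real.norm_of_nonneg (by linarith [hτ.2]),
            Real.norm_of_nonneg (le_of_lt hτ.1)]
      _ ≤ (1 - τ) * ‖a - b‖ + τ * ‖a - b‖ := by
          have := hQ a b
          nlinarith [hτ.1]
      _ = ‖a - b‖ := by ring
  have hTcont : Continuous T := by
    have : LipschitzWith 1 T := by
      intro a b
      simp only [edist_dist, dist_eq_norm]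
      rw [ENNReal.coe_one, one_mul]
      exact ENNReal.ofReal_le_ofReal (hne a b)
    exact this.continuous
  -- coercivity in usable form
  have hcoer' : ∀ C : ℝ, ∃ R : ℝ, ∀ w : E, ‖w - T w‖ ≤ C → ‖w‖ ≤ R := by
    intro C
    have h1 : ∀ᶠ w in Filter.comap norm Filter.atTop, C + 1 ≤ ‖w - T w‖ :=
      hcoer.eventually (Filter.eventually_ge_atTop (C + 1))
    rw [Filter.eventually_comap] at h1
    obtain ⟨R, hR⟩ := Filter.eventually_atTop.1 h1
    refine ⟨R, fun w hw => ?_⟩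
    by_contra hcon
    push_neg at hcon
    have := hR ‖w‖ (le_of_lt hcon) w rfl
    linarith
  set S := {k : ℕ | ‖y k - T (y k)‖ ≤ α * μ k} with hS
  -- key estimate on safe steps
  have hSstep : ∀ k ∈ S, ‖x (k + 1) - T (x (k + 1))‖ ≤ α * μ k := by
    intro k hk
    rw [(hupd k).1 hk]
    exact hk
  -- bound on safe iterates
  have hK0 : ∃ K0 : ℝ, ∀ k ∈ S, ‖x (k + 1) - z‖ ≤ K0 := by
    by_cases hSinf : S.Infinite
    · obtain ⟨M, hM⟩ := (hsafe hSinf).bddAbove_range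
      obtain ⟨R, hR⟩ := hcoer' (α * M)
      refine ⟨R + ‖z‖, fun k hk => ?_⟩
      have hμM : μ k ≤ M := hM ⟨k, rfl⟩
      have h1 : ‖x (k + 1) - T (x (k + 1))‖ ≤ α * M :=
        (hSstep k hk).trans (by nlinarith [hμ k])
      have := hR _ h1
      calc ‖x (k + 1) - z‖ ≤ ‖x (k + 1)‖ + ‖z‖ := norm_sub_le _ _
        _ ≤ R + ‖z‖ := by linarith
    · have hfin : ((fun k => ‖x (k + 1) - z‖) '' S).Finite :=
        (Set.not_infinite.1 hSinf).image _
      obtain ⟨K0, hK0⟩ := hfin.bddAbove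
      exact ⟨K0, fun k hk => hK0 ⟨k, hk, rfl⟩⟩
  obtain ⟨K0, hK0⟩ := hK0
  -- the whole sequence is bounded
  have hbd : ∀ k, ‖x k - z‖ ≤ max ‖x 0 - z‖ K0 := by
    intro k
    induction k with
    | zero => exact le_max_left _ _
    | succ n ih =>
      by_cases hn : n ∈ S
      · exact (hK0 n hn).trans (le_max_right _ _)
      · rw [(hupd n).2 hn]
        calc ‖T (x n) - z‖ = ‖T (x n) - T z‖ := by rw [hz]
          _ ≤ ‖x n - z‖ := hne _ _
          _ ≤ _ := ih
  -- convergence to xstar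
  have hconv : Filter.Tendsto x Filter.atTop (nhds xstar) := by
    by_contra hcon
    rw [Metric.tendsto_atTop] at hcon
    push_neg at hcon
    obtain ⟨ε, hε, hfreq⟩ := hcon
    -- extract a subsequence staying ε-away from xstar
    have hfreq' : ∀ N : ℕ, ∃ n ≥ N, ε ≤ dist (x n) xstar := hfreq
    choose f hf1 hf2 using hfreq'
    set φ : ℕ → ℕ := fun n => Nat.rec (f 0) (fun _ m => f (m + 1)) n with hφ
    have hφmono : StrictMono φ := strictMono_nat_of_lt_succ fun n => by
      have := hf1 (φ n + 1)
      simpa [hφ] using lt_of_lt_of_le (Nat.lt_succ_self _) this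
    have hφaway : ∀ n, ε ≤ dist (x (φ n)) xstar := by
      intro n
      cases n with
      | zero => exact hf2 0
      | succ m => exact hf2 (φ m + 1)
    -- Bolzano–Weierstrass on the bounded subsequence
    have hmem : ∀ n, x (φ n) ∈ Metric.closedBall z (max ‖x 0 - z‖ K0) := by
      intro n
      rw [Metric.mem_closedBall, dist_eq_norm]
      exact hbd _
    obtain ⟨p, _, ψ, hψmono, hψlim⟩ :=
      tendsto_subseq_of_bounded Metric.isBounded_closedBall hmem
    have hpcluster : MapClusterPt p Filter.atTop x :=
      MapClusterPt.of_comp ((hφmono.comp hψmono).tendsto_atTop)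
        hψlim.mapClusterPt
    have hp : p = xstar := huniq p hpcluster
    have : ε ≤ dist p xstar := by
      have hd : Filter.Tendsto (fun n => dist (x (φ (ψ n))) xstar)
          Filter.atTop (nhds (dist p xstar)) :=
        (Continuous.dist continuous_id continuous_const).continuousAt.tendsto.comp hψlim
      exact ge_of_tendsto hd (Filter.Eventually.of_forall fun n => hφaway (ψ n))
    rw [hp, dist_self] at this
    linarith
  refine ⟨hconv, ?_⟩
  -- fixed point property
  by_cases hSinf : S.Infinite
  · -- safe steps infinitely often: μ → 0 squeezes ‖x⁺ - T x⁺‖ to 0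
    have hμ0 := hsafe hSinf
    obtain ⟨g, hgmono, hgmem⟩ : ∃ g : ℕ → ℕ, StrictMono g ∧ ∀ n, g n ∈ S :=
      ⟨Nat.nth (· ∈ S), Nat.nth_strictMono hSinf,
        fun n => Nat.nth_mem_of_infinite hSinf n⟩
    have hgtop : Filter.Tendsto g Filter.atTop Filter.atTop := hgmono.tendsto_atTop
    have hg1 : Filter.Tendsto (fun n => g n + 1) Filter.atTop Filter.atTop :=
      Filter.tendsto_atTop_mono (fun n => Nat.le_succ (g n)) hgtop
    have hxg : Filter.Tendsto (fun n => x (g n + 1)) Filter.atTop (nhds xstar) :=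
      hconv.comp hg1
    have hlim1 : Filter.Tendsto (fun n => ‖x (g n + 1) - T (x (g n + 1))‖)
        Filter.atTop (nhds ‖xstar - T xstar‖) := by
      have : Continuous fun w : E => ‖w - T w‖ :=
        (continuous_id.sub hTcont).norm
      exact (this.continuousAt.tendsto).comp hxg
    have hlim2 : Filter.Tendsto (fun n => α * μ (g n)) Filter.atTop (nhds 0) := by
      have := (hμ0.comp hgtop).const_mul α
      simpa using this
    have hle : ‖xstar - T xstar‖ ≤ 0 :=
      le_of_tendsto_of_tendsto' hlim1 hlim2 fun n => hSstep (g n) (hgmem n)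
    have : ‖xstar - T xstar‖ = 0 := le_antisymm hle (norm_nonneg _)
    have := sub_eq_zero.1 (norm_eq_zero.1 this)
    exact this.symm
  · -- eventually the fallback T-step is used
    obtain ⟨N, hN⟩ := (Set.not_infinite.1 hSinf).bddAbove
    have hstep : ∀ k ≥ N + 1, x (k + 1) = T (x k) := by
      intro k hk
      refine (hupd k).2 fun hmem => ?_
      have := hN hmem
      omega
    have h1 : Filter.Tendsto (fun k => x (k + 1)) Filter.atTop (nhds xstar) :=
      hconv.comp (Filter.tendsto_atTop_mono (fun n => Nat.le_succ n) Filter.tendsto_id)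
    have h2 : Filter.Tendsto (fun k => T (x k)) Filter.atTop (nhds (T xstar)) :=
      (hTcont.continuousAt.tendsto).comp hconv
    have h3 : Filter.Tendsto (fun k => x (k + 1)) Filter.atTop (nhds (T xstar)) := by
      refine h2.congr' ?_
      filter_upwards [Filter.eventually_ge_atTop (N + 1)] with k hk
      exact (hstep k hk).symm
    exact (tendsto_nhds_unique h3 h1).symm ▸ rfl
end

section
/- Recent Term safeguard (RT): Let α ∈ (0,1), let {r_k}_{k≥1} be nonnegative reals, and let μ_1 ≥ 0 with μ_{k+1} = r_{k+1} if r_{k+1} ≤ α μ_k, and μ_{k+1} = μ_k otherwise. If the inequality r_{k+1} ≤ α μ_k holds for infinitely many k, then μ_k → 0. -/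
/-- **Recent Term safeguard (RT).** With `α ∈ (0,1)`, nonnegative residuals `{r_k}`,
`μ_1 ≥ 0`, and the update `μ_{k+1} = r_{k+1}` if `r_{k+1} ≤ α μ_k` and `μ_{k+1} = μ_k`
otherwise: if the inequality holds infinitely often, `μ_k → 0`.
(Indices are shifted so that `μ 0` plays the role of `μ_1`.) -/
theorem recent_term_safeguard
    (α : ℝ) (hα : α ∈ Set.Ioo (0 : ℝ) 1)
    (r μ : ℕ → ℝ) (hr : ∀ k, 0 ≤ r k) (hμ0 : 0 ≤ μ 0)
    (hupd : ∀ k : ℕ,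
      (r (k + 1) ≤ α * μ k → μ (k + 1) = r (k + 1)) ∧
      (¬ r (k + 1) ≤ α * μ k → μ (k + 1) = μ k))
    (hinf : {k : ℕ | r (k + 1) ≤ α * μ k}.Infinite) :
    Filter.Tendsto μ Filter.atTop (nhds 0) := by
  obtain ⟨hα0, hα1⟩ := hα
  -- μ is nonnegative
  have hμnn : ∀ k, 0 ≤ μ k := by
    intro k
    induction k with
    | zero => exact hμ0
    | succ n ih =>
      by_cases h : r (n + 1) ≤ α * μ n
      · rw [(hupd n).1 h]; exact hr _
      · rw [(hupd n).2 h]; exact ih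
  -- μ is antitone (step version)
  have hstep : ∀ k, μ (k + 1) ≤ μ k := by
    intro k
    by_cases h : r (k + 1) ≤ α * μ k
    · rw [(hupd k).1 h]
      calc r (k + 1) ≤ α * μ k := h
        _ ≤ 1 * μ k := by nlinarith [hμnn k]
        _ = μ k := one_mul _
    · rw [(hupd k).2 h]
  have hanti : Antitone μ := antitone_nat_of_succ_le hstep
  -- limit exists
  have hbdd : BddBelow (Set.range μ) := ⟨0, fun x ⟨k, hk⟩ => hk ▸ hμnn k⟩
  set L := ⨅ k, μ k with hL
  have htend : Filter.Tendsto μ Filter.atTop (nhds L) :=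
    tendsto_atTop_ciInf hanti hbdd
  have hLnn : 0 ≤ L := le_ciInf hμnn
  -- show L ≤ α * L using frequently accepted steps
  have hfreq : ∃ᶠ k in Filter.atTop, L ≤ α * μ k := by
    rw [Filter.frequently_atTop]
    intro n
    obtain ⟨k, hk, hkn⟩ := hinf.exists_gt n
    refine ⟨k, le_of_lt hkn, ?_⟩
    calc L ≤ μ (k + 1) := ciInf_le hbdd _
      _ = r (k + 1) := (hupd k).1 hk
      _ ≤ α * μ k := hk
  have hclosed : IsClosed {x : ℝ | L ≤ x} := isClosed_le continuous_const continuous_id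
  have hmul : Filter.Tendsto (fun k => α * μ k) Filter.atTop (nhds (α * L)) :=
    htend.const_mul α
  have hLle : L ≤ α * L := hclosed.mem_of_frequently_of_tendsto hfreq hmul
  have hL0 : L = 0 := by nlinarith
  rwa [hL0] at htend
end

section
/- Arithmetic Average safeguard (AA): Let α ∈ (0,1), let {r_k}_{k≥1} be nonnegative reals, and define μ_1 ≥ 0, m_1 = 1, and for each k: if r_{k+1} ≤ α μ_k then m_{k+1} = m_k + 1 and μ_{k+1} = (r_{k+1} + m_k μ_k)/(m_k + 1), and otherwise m_{k+1} = m_k and μ_{k+1} = μ_k. If the inequality r_{k+1} ≤ α μ_k holds for infinitely many k, then μ_k → 0. -/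
/-!
At an accepted step the new average is `(r + m μ)/(m + 1) ≤ (m + α)/(m + 1) · μ`, and otherwise
`μ` and `m` are frozen, so `μ_k` is bounded by `μ_1` times the partial product
`∏_{m_1 ≤ i < m_k} (i + α)/(i + 1)`. Since `1 - (1 - α)/(i + 1) ≤ exp (-(1 - α)/(i + 1))`, the
divergence of the harmonic series drives this product to `0` once infinitely many steps are
accepted, i.e. once `m_k → ∞`.
-/

open Filter Finset Topology

/-- `(α)_n / n!`, with `(α)_n` the rising factorial. -/
noncomputable def pochhammerRatio (α : ℝ) (n : ℕ) : ℝ :=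
  ∏ i ∈ range n, ((i : ℝ) + α) / ((i : ℝ) + 1)

namespace pochhammerRatio

variable {α : ℝ}

theorem succ (α : ℝ) (n : ℕ) :
    pochhammerRatio α (n + 1) = ((n : ℝ) + α) / ((n : ℝ) + 1) * pochhammerRatio α n := by
  rw [pochhammerRatio, prod_range_succ, mul_comm]
  rfl

theorem pos (hα : 0 < α) (n : ℕ) : 0 < pochhammerRatio α n :=
  prod_pos fun _ _ => by positivity

theorem nonneg (hα : 0 ≤ α) (n : ℕ) : 0 ≤ pochhammerRatio α n :=
  prod_nonneg fun _ _ => by positivity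

theorem le_exp_neg_harmonic (hα : 0 ≤ α) (n : ℕ) :
    pochhammerRatio α n ≤ Real.exp (-((1 - α) * ∑ i ∈ range n, 1 / ((i : ℝ) + 1))) := by
  have hfactor (i : ℕ) : ((i : ℝ) + α) / ((i : ℝ) + 1) = 1 - (1 - α) * (1 / ((i : ℝ) + 1)) := by
    field_simp
    ring
  rw [mul_sum, ← sum_neg_distrib, Real.exp_sum]
  refine prod_le_prod (fun _ _ => by positivity) fun i _ => ?_
  rw [hfactor]
  exact Real.one_sub_le_exp_neg _

theorem tendsto_zero (hα₀ : 0 ≤ α) (hα₁ : α < 1) :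
    Tendsto (pochhammerRatio α) atTop (𝓝 0) := by
  have hexponent : Tendsto (fun n => -((1 - α) * ∑ i ∈ range n, 1 / ((i : ℝ) + 1)))
      atTop atBot :=
    tendsto_neg_atTop_atBot.comp
      (Real.tendsto_sum_range_one_div_nat_succ_atTop.const_mul_atTop (by linarith))
  exact squeeze_zero (nonneg hα₀) (le_exp_neg_harmonic hα₀)
    (Real.tendsto_exp_atBot.comp hexponent)

end pochhammerRatio
def SafeguardUpdate (α : ℝ) (r μ : ℕ → ℝ) (m : ℕ → ℕ) : Prop :=
  ∀ k : ℕ,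
    (r (k + 1) ≤ α * μ k →
      m (k + 1) = m k + 1 ∧
      μ (k + 1) = (r (k + 1) + (m k : ℝ) * μ k) / ((m k : ℝ) + 1)) ∧
    (¬ r (k + 1) ≤ α * μ k → m (k + 1) = m k ∧ μ (k + 1) = μ k)

theorem running_average_le_of_le {α r μ M : ℝ} (hM : 0 ≤ M) (h : r ≤ α * μ) :
    (r + M * μ) / (M + 1) ≤ (M + α) / (M + 1) * μ := by
  rw [div_mul_eq_mul_div, add_mul, add_comm (M * μ)]
  gcongr

namespace SafeguardUpdate

variable {α : ℝ} {r μ : ℕ → ℝ} {m : ℕ → ℕ}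

theorem monotone_counter (h : SafeguardUpdate α r μ m) : Monotone m := by
  refine monotone_nat_of_le_succ fun k => ?_
  by_cases hk : r (k + 1) ≤ α * μ k
  · exact ((h k).1 hk).1 ▸ Nat.le_succ _
  · exact ((h k).2 hk).1.ge

theorem tendsto_counter_atTop (h : SafeguardUpdate α r μ m)
    (hinf : {k : ℕ | r (k + 1) ≤ α * μ k}.Infinite) : Tendsto m atTop atTop := by
  refine tendsto_atTop_atTop_of_monotone h.monotone_counter fun N => ?_
  induction N with
  | zero => exact ⟨0, Nat.zero_le _⟩
  | succ N ih =>
    obtain ⟨k, hk⟩ := ih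
    obtain ⟨k', hk', hkk'⟩ := hinf.exists_gt k
    refine ⟨k' + 1, ?_⟩
    rw [((h k').1 hk').1]
    exact Nat.succ_le_succ (hk.trans (h.monotone_counter hkk'.le))

theorem average_nonneg (h : SafeguardUpdate α r μ m) (hr : ∀ k, 0 ≤ r k) (hμ0 : 0 ≤ μ 0)
    (k : ℕ) : 0 ≤ μ k := by
  induction k with
  | zero => exact hμ0
  | succ k ih =>
    by_cases hk : r (k + 1) ≤ α * μ k
    · rw [((h k).1 hk).2]
      have := hr (k + 1)
      positivity
    · rw [((h k).2 hk).2]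
      exact ih

/-- The invariant `μ k ≤ μ 0 · (pochhammerRatio α (m k) / pochhammerRatio α (m 0))`,
written without division. -/
theorem average_mul_pochhammerRatio_le (h : SafeguardUpdate α r μ m) (hα : 0 ≤ α) (k : ℕ) :
    μ k * pochhammerRatio α (m 0) ≤ μ 0 * pochhammerRatio α (m k) := by
  induction k with
  | zero => rw [mul_comm]
  | succ k ih =>
    by_cases hk : r (k + 1) ≤ α * μ k
    · obtain ⟨hm, hμ⟩ := (h k).1 hk
      have hstep : μ (k + 1) ≤ ((m k : ℝ) + α) / ((m k : ℝ) + 1) * μ k :=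
        hμ ▸ running_average_le_of_le (Nat.cast_nonneg _) hk
      calc μ (k + 1) * pochhammerRatio α (m 0)
          ≤ ((m k : ℝ) + α) / ((m k : ℝ) + 1) * (μ k * pochhammerRatio α (m 0)) := by
            rw [← mul_assoc]
            exact mul_le_mul_of_nonneg_right hstep (pochhammerRatio.nonneg hα _)
        _ ≤ ((m k : ℝ) + α) / ((m k : ℝ) + 1) * (μ 0 * pochhammerRatio α (m k)) := by
            gcongr
        _ = μ 0 * pochhammerRatio α (m (k + 1)) := by
            rw [hm, pochhammerRatio.succ]
            ring
    · obtain ⟨hm, hμ⟩ := (h k).2 hk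
      rw [hm, hμ]
      exact ih

end SafeguardUpdate

theorem arithmetic_average_safeguard_general
    (α : ℝ) (hα : α ∈ Set.Ioo (0 : ℝ) 1)
    (r μ : ℕ → ℝ) (m : ℕ → ℕ)
    (hr : ∀ k, 0 ≤ r k) (hμ0 : 0 ≤ μ 0)
    (hupd : ∀ k : ℕ,
      (r (k + 1) ≤ α * μ k →
        m (k + 1) = m k + 1 ∧
        μ (k + 1) = (r (k + 1) + (m k : ℝ) * μ k) / ((m k : ℝ) + 1)) ∧
      (¬ r (k + 1) ≤ α * μ k → m (k + 1) = m k ∧ μ (k + 1) = μ k))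
    (hinf : {k : ℕ | r (k + 1) ≤ α * μ k}.Infinite) :
    Filter.Tendsto μ Filter.atTop (nhds 0) := by
  obtain ⟨hα₀, hα₁⟩ := hα
  have h : SafeguardUpdate α r μ m := hupd
  have hP0 := pochhammerRatio.pos hα₀ (m 0)
  have hbound (k : ℕ) : μ k ≤ μ 0 / pochhammerRatio α (m 0) * pochhammerRatio α (m k) := by
    rw [div_mul_eq_mul_div, le_div_iff₀ hP0]
    exact h.average_mul_pochhammerRatio_le hα₀.le k
  have hlim : Tendsto (fun k => μ 0 / pochhammerRatio α (m 0) * pochhammerRatio α (m k))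
      atTop (𝓝 0) := by
    simpa using ((pochhammerRatio.tendsto_zero hα₀.le hα₁).comp
      (h.tendsto_counter_atTop hinf)).const_mul (μ 0 / pochhammerRatio α (m 0))
  exact squeeze_zero (h.average_nonneg hr hμ0) hbound hlim

/-- **Arithmetic Average safeguard (AA).** With `α ∈ (0,1)`, nonnegative residuals
`{r_k}`, `μ_1 ≥ 0`, counter `m_1 = 1`, and the update: if `r_{k+1} ≤ α μ_k` then
`m_{k+1} = m_k + 1` and `μ_{k+1} = (r_{k+1} + m_k μ_k)/(m_k + 1)`, otherwise
`m_{k+1} = m_k` and `μ_{k+1} = μ_k`. If the inequality holds infinitely often,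
then `μ_k → 0`. (Indices are shifted so that `μ 0, m 0` play the roles of `μ_1, m_1`.) -/
theorem arithmetic_average_safeguard
    (α : ℝ) (hα : α ∈ Set.Ioo (0 : ℝ) 1)
    (r μ : ℕ → ℝ) (m : ℕ → ℕ)
    (hr : ∀ k, 0 ≤ r k) (hμ0 : 0 ≤ μ 0) (hm0 : m 0 = 1)
    (hupd : ∀ k : ℕ,
      (r (k + 1) ≤ α * μ k →
        m (k + 1) = m k + 1 ∧
        μ (k + 1) = (r (k + 1) + (m k : ℝ) * μ k) / ((m k : ℝ) + 1)) ∧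
      (¬ r (k + 1) ≤ α * μ k → m (k + 1) = m k ∧ μ (k + 1) = μ k))
    (hinf : {k : ℕ | r (k + 1) ≤ α * μ k}.Infinite) :
    Filter.Tendsto μ Filter.atTop (nhds 0) :=
  arithmetic_average_safeguard_general α hα r μ m hr hμ0 hupd hinf
end

section
/- Exponential Moving Average safeguard (EMA(θ)): Let α, θ ∈ (0,1), let {r_k}_{k≥1} be nonnegative reals, and let μ_1 ≥ 0 with μ_{k+1} = θ r_{k+1} + (1−θ) μ_k if r_{k+1} ≤ α μ_k, and μ_{k+1} = μ_k otherwise. If the inequality r_{k+1} ≤ α μ_k holds for infinitely many k, then μ_k → 0. -/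
/-- **Exponential Moving Average safeguard EMA(θ).** With `α, θ ∈ (0,1)`, nonnegative
residuals `{r_k}`, `μ_1 ≥ 0`, and the update `μ_{k+1} = θ r_{k+1} + (1-θ) μ_k` if
`r_{k+1} ≤ α μ_k` and `μ_{k+1} = μ_k` otherwise: if the inequality holds infinitely
often, then `μ_k → 0`. (Indices are shifted so that `μ 0` plays the role of `μ_1`.) -/
theorem exponential_moving_average_safeguard
    (α θ : ℝ) (hα : α ∈ Set.Ioo (0 : ℝ) 1) (hθ : θ ∈ Set.Ioo (0 : ℝ) 1)
    (r μ : ℕ → ℝ) (hr : ∀ k, 0 ≤ r k) (hμ0 : 0 ≤ μ 0)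
    (hupd : ∀ k : ℕ,
      (r (k + 1) ≤ α * μ k → μ (k + 1) = θ * r (k + 1) + (1 - θ) * μ k) ∧
      (¬ r (k + 1) ≤ α * μ k → μ (k + 1) = μ k))
    (hinf : {k : ℕ | r (k + 1) ≤ α * μ k}.Infinite) :
    Filter.Tendsto μ Filter.atTop (nhds 0) := by
  obtain ⟨hα0, hα1⟩ := hα
  obtain ⟨hθ0, hθ1⟩ := hθ
  have hμ : ∀ k, 0 ≤ μ k := by
    intro k; induction k with
    | zero => exact hμ0
    | succ n ih =>
      by_cases h : r (n+1) ≤ α * μ n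
      · rw [(hupd n).1 h]; nlinarith [hr (n+1)]
      · rw [(hupd n).2 h]; exact ih
  set c := 1 - θ * (1 - α) with hc
  have hc1 : c < 1 := by nlinarith
  have hc0 : 0 ≤ c := by nlinarith
  have hstep : ∀ k, r (k+1) ≤ α * μ k → μ (k+1) ≤ c * μ k := by
    intro k h; rw [(hupd k).1 h, hc]; nlinarith [hμ k]
  have hanti : ∀ k, μ (k+1) ≤ μ k := by
    intro k; by_cases h : r (k+1) ≤ α * μ k
    · calc μ (k+1) ≤ c * μ k := hstep k h
        _ ≤ 1 * μ k := mul_le_mul_of_nonneg_right hc1.le (hμ k)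
        _ = μ k := one_mul _
    · rw [(hupd k).2 h]
  have hantit : Antitone μ := antitone_nat_of_succ_le hanti
  have hbdd : BddBelow (Set.range μ) := ⟨0, by rintro x ⟨k, rfl⟩; exact hμ k⟩
  have htend : Filter.Tendsto μ Filter.atTop (nhds (⨅ k, μ k)) :=
    tendsto_atTop_ciInf hantit hbdd
  set L := ⨅ k, μ k with hL
  have hL0 : 0 ≤ L := le_ciInf fun k => hμ k
  have hLle : ∀ k, L ≤ μ k := fun k => ciInf_le hbdd k
  have key : L ≤ c * L := by
    apply le_of_forall_pos_le_add
    intro ε hε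
    have hev : ∀ᶠ n in Filter.atTop, μ n < L + ε := by
      have := htend.eventually (gt_mem_nhds (lt_add_of_pos_right L hε))
      exact this
    obtain ⟨N, hN⟩ := Filter.eventually_atTop.1 hev
    obtain ⟨n, hn, hNn⟩ := hinf.exists_gt N
    calc L ≤ μ (n+1) := hLle (n+1)
      _ ≤ c * μ n := hstep n hn
      _ ≤ c * (L + ε) := mul_le_mul_of_nonneg_left (hN n hNn.le).le hc0
      _ ≤ c * L + ε := by nlinarith
  have hLzero : L = 0 := by nlinarith
  rwa [hLzero] at htend
end

section
/- Recent Max safeguard (RM(m)): Let α ∈ (0,1) and m ∈ ℕ with m ≥ 1. Let {r_k}_{k≥1} be nonnegative reals and define μ_1 = r_1 and, for each k, say step k+1 is accepted if r_{k+1} ≤ α μ_k; let Ξ_k be the set of the (up to) m most recent accepted indices ℓ ≤ k+1, and set μ_{k+1} = max_{ℓ ∈ Ξ_k} r_ℓ if Ξ_k is nonempty, μ_{k+1} = μ_k otherwise. If infinitely many steps are accepted, then μ_k → 0. -/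
/-- **Recent Max safeguard RM(m).** With `α ∈ (0,1)` and `m ≥ 1`: `μ_1 = r_1`; step
`k+1` is accepted iff `r_{k+1} ≤ α μ_k`; `Ξ_k` is the set of the (up to) `m` most
recent accepted indices `ℓ ≤ k+1` (i.e. accepted `ℓ ≤ k+1` with fewer than `m`
accepted indices strictly between `ℓ` and `k+1` inclusive); and
`μ_{k+1} = max_{ℓ ∈ Ξ_k} r_ℓ` when `Ξ_k ≠ ∅`, `μ_{k+1} = μ_k` otherwise.
If infinitely many steps are accepted, then `μ_k → 0`.
(Indices are shifted so that `μ 0 = r 0` plays the role of `μ_1 = r_1`.) -/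
theorem recent_max_safeguard
    (α : ℝ) (hα : α ∈ Set.Ioo (0 : ℝ) 1)
    (m : ℕ) (hm : 1 ≤ m)
    (r μ : ℕ → ℝ) (hr : ∀ k, 0 ≤ r k) (hμ0 : μ 0 = r 0)
    (acc : ℕ → Prop)
    (hacc0 : ¬ acc 0)
    (hacc : ∀ k : ℕ, acc (k + 1) ↔ r (k + 1) ≤ α * μ k)
    (Xi : ℕ → Set ℕ)
    (hXi : ∀ k ℓ : ℕ, ℓ ∈ Xi k ↔
      (ℓ ≤ k + 1 ∧ acc ℓ ∧ {j : ℕ | ℓ < j ∧ j ≤ k + 1 ∧ acc j}.ncard < m))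
    (hupd : ∀ k : ℕ,
      ((Xi k).Nonempty → IsGreatest (r '' Xi k) (μ (k + 1))) ∧
      (Xi k = ∅ → μ (k + 1) = μ k))
    (hinf : {j : ℕ | acc j}.Infinite) :
    Filter.Tendsto μ Filter.atTop (nhds 0) := by
  obtain ⟨hα0, hα1⟩ := hα
  -- nonnegativity of μ
  have hμnn : ∀ k, 0 ≤ μ k := by
    intro k
    induction k with
    | zero => rw [hμ0]; exact hr 0
    | succ k ih =>
      rcases Set.eq_empty_or_nonempty (Xi k) with he | hne
      · rw [(hupd k).2 he]; exact ih
      · obtain ⟨⟨ℓ, hℓ, hx⟩, -⟩ := (hupd k).1 hne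
        rw [← hx]; exact hr ℓ
  -- accepted indices are positive and satisfy the contraction inequality
  have hacc_pos : ∀ ℓ, acc ℓ → ∃ ℓ', ℓ = ℓ' + 1 ∧ r ℓ ≤ α * μ ℓ' := by
    intro ℓ hℓ
    cases ℓ with
    | zero => exact absurd hℓ hacc0
    | succ ℓ' => exact ⟨ℓ', rfl, (hacc ℓ').1 hℓ⟩
  have hfin : ∀ K : ℕ, ∀ S : Set ℕ, (∀ j ∈ S, j ≤ K) → S.Finite := by
    intro K S hS
    exact (Set.finite_Iic K).subset hS
  -- monotonicity: μ (k+1) ≤ μ k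
  have hmono : ∀ k, μ (k + 1) ≤ μ k := by
    intro k
    rcases Set.eq_empty_or_nonempty (Xi k) with he | hne
    · rw [(hupd k).2 he]
    · obtain ⟨⟨ℓ, hℓ, hx⟩, -⟩ := (hupd k).1 hne
      rw [← hx]
      obtain ⟨hℓ1, hℓacc, hℓcard⟩ := (hXi k ℓ).1 hℓ
      rcases eq_or_lt_of_le hℓ1 with heq | hlt
      · subst heq
        calc r (k + 1) ≤ α * μ k := (hacc k).1 hℓacc
          _ ≤ 1 * μ k := by
            apply mul_le_mul_of_nonneg_right hα1.le (hμnn k)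
          _ = μ k := one_mul _
      · -- ℓ ≤ k, so ℓ ∈ Xi (k-1)
        have hℓk : ℓ ≤ k := Nat.lt_succ_iff.mp hlt
        obtain ⟨ℓ', hℓ', -⟩ := hacc_pos ℓ hℓacc
        have hk1 : 1 ≤ k := by omega
        obtain ⟨k', rfl⟩ : ∃ k', k = k' + 1 := ⟨k - 1, by omega⟩
        have hmem : ℓ ∈ Xi k' := by
          rw [hXi k' ℓ]
          refine ⟨hℓk, hℓacc, lt_of_le_of_lt ?_ hℓcard⟩
          apply Set.ncard_le_ncard
          · intro j hj
            obtain ⟨h1, h2, h3⟩ := hj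
            exact ⟨h1, by omega, h3⟩
          · exact hfin (k' + 2) _ (fun j hj => hj.2.1)
        obtain ⟨-, hub⟩ := (hupd k').1 ⟨ℓ, hmem⟩
        exact hub ⟨ℓ, hmem, rfl⟩
  have hanti : Antitone μ := antitone_nat_of_succ_le hmono
  -- contraction after m acceptances beyond k₀
  have hdrop : ∀ k₀ k : ℕ, k₀ ≤ k →
      m ≤ {j : ℕ | k₀ < j ∧ j ≤ k + 1 ∧ acc j}.ncard → μ (k + 1) ≤ α * μ k₀ := by
    intro k₀ k hk₀k hcard
    set S := {j : ℕ | k₀ < j ∧ j ≤ k + 1 ∧ acc j} with hS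
    have hSfin : S.Finite := hfin (k + 1) S (fun j hj => hj.2.1)
    have hSne : S.Nonempty := by
      rw [← Set.ncard_pos hSfin]; omega
    -- Xi k is nonempty: the max of S belongs to it
    have hXine : (Xi k).Nonempty := by
      obtain ⟨ℓs, hℓs⟩ := hSne
      have htne : hSfin.toFinset.Nonempty := ⟨ℓs, hSfin.mem_toFinset.mpr hℓs⟩
      set M := hSfin.toFinset.max' htne with hM
      have hMmem : M ∈ S := hSfin.mem_toFinset.mp (hSfin.toFinset.max'_mem htne)
      have hMmax : ∀ a ∈ S, a ≤ M := fun a ha =>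
        hSfin.toFinset.le_max' a (hSfin.mem_toFinset.mpr ha)
      refine ⟨M, (hXi k M).2 ⟨hMmem.2.1, hMmem.2.2, ?_⟩⟩
      have : {j : ℕ | M < j ∧ j ≤ k + 1 ∧ acc j} = ∅ := by
        ext j
        simp only [Set.mem_setOf_eq, Set.mem_empty_iff_false, iff_false, not_and]
        intro hMj hj1 hja
        have : j ∈ S := ⟨lt_trans hMmem.1 hMj, hj1, hja⟩
        exact absurd (hMmax j this) (by omega)
      rw [this, Set.ncard_empty]; omega
    obtain ⟨⟨ℓ, hℓ, hx⟩, -⟩ := (hupd k).1 hXine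
    rw [← hx]
    obtain ⟨hℓ1, hℓacc, hℓcard⟩ := (hXi k ℓ).1 hℓ
    -- ℓ > k₀
    have hℓk₀ : k₀ < ℓ := by
      by_contra h
      push_neg at h
      have hsub : S ⊆ {j : ℕ | ℓ < j ∧ j ≤ k + 1 ∧ acc j} := by
        intro j hj
        exact ⟨lt_of_le_of_lt h hj.1, hj.2.1, hj.2.2⟩
      have := Set.ncard_le_ncard hsub (hfin (k + 1) _ (fun j hj => hj.2.1))
      omega
    obtain ⟨ℓ', rfl, hℓbound⟩ := hacc_pos ℓ hℓacc
    calc r (ℓ' + 1) ≤ α * μ ℓ' := hℓbound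
      _ ≤ α * μ k₀ := by
        apply mul_le_mul_of_nonneg_left (hanti (by omega)) hα0.le
  -- geometric decay
  have hgeo : ∀ n : ℕ, ∃ K : ℕ, ∀ k, K ≤ k → μ k ≤ α ^ n * μ 0 := by
    intro n
    induction n with
    | zero => exact ⟨0, fun k _ => by simpa using hanti (Nat.zero_le k)⟩
    | succ n ih =>
      obtain ⟨K, hK⟩ := ih
      obtain ⟨t, hts, htfin, htcard⟩ :=
        (hinf.diff (Set.finite_Iic K)).exists_subset_ncard_eq m
      have htne : t.Nonempty := by rw [← Set.ncard_pos htfin]; omega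
      have hfne : htfin.toFinset.Nonempty := by
        obtain ⟨x, hx⟩ := htne; exact ⟨x, htfin.mem_toFinset.mpr hx⟩
      set N := htfin.toFinset.max' hfne with hN
      refine ⟨max N (K + 1), fun k hk => ?_⟩
      obtain ⟨k', rfl⟩ : ∃ k', k = k' + 1 := ⟨k - 1, by omega⟩
      have hsub : t ⊆ {j : ℕ | K < j ∧ j ≤ k' + 1 ∧ acc j} := by
        intro j hj
        have h1 := hts hj
        have h2 : j ≤ N := htfin.toFinset.le_max' j (htfin.mem_toFinset.mpr hj)
        simp only [Set.mem_diff, Set.mem_setOf_eq, Set.mem_Iic] at h1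
        exact ⟨by omega, by omega, h1.1⟩
      have hcard : m ≤ {j : ℕ | K < j ∧ j ≤ k' + 1 ∧ acc j}.ncard := by
        rw [← htcard]
        exact Set.ncard_le_ncard hsub (hfin (k' + 1) _ (fun j hj => hj.2.1))
      calc μ (k' + 1) ≤ α * μ K := hdrop K k' (by omega) hcard
        _ ≤ α * (α ^ n * μ 0) := mul_le_mul_of_nonneg_left (hK K le_rfl) hα0.le
        _ = α ^ (n + 1) * μ 0 := by ring
  -- conclude
  rw [Metric.tendsto_atTop]
  intro ε hε
  have hpow : Filter.Tendsto (fun n : ℕ => α ^ n * μ 0) Filter.atTop (nhds 0) := by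
    have := (tendsto_pow_atTop_nhds_zero_of_lt_one hα0.le hα1).mul_const (μ 0)
    simpa using this
  obtain ⟨n, hn⟩ := (hpow.eventually (gt_mem_nhds hε)).exists
  obtain ⟨K, hK⟩ := hgeo n
  refine ⟨K, fun k hk => ?_⟩
  rw [Real.dist_eq, sub_zero, abs_of_nonneg (hμnn k)]
  exact lt_of_le_of_lt (hK k hk) hn
end

section
/- Boundedness of Safe-L2O iterates: Let T : E → E be averaged with Fix(T) ≠ ∅ and Id − T coercive. Fix α ∈ [0,1), sequences {y^k} ⊆ E, {x^k} ⊆ E and nonnegative reals {μ_k} with x^{k+1} = y^k if ‖y^k − T(y^k)‖ ≤ α μ_k and x^{k+1} = T(x^k) otherwise. If the inequality ‖y^k − T(y^k)‖ ≤ α μ_k holds for infinitely many k and μ_k → 0, then the sequence {x^k} is bounded. -/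
/-- **Boundedness of Safe-L2O iterates.** Let `T` be averaged with `Fix T ≠ ∅` and
`Id - T` coercive. Fix `α ∈ [0,1)`, sequences `{y^k}, {x^k}` and nonnegative `{μ_k}`
with `x^{k+1} = y^k` when `‖y^k - T y^k‖ ≤ α μ_k` and `x^{k+1} = T (x^k)` otherwise.
If the inequality holds infinitely often and `μ_k → 0`, then `{x^k}` is bounded. -/
theorem safe_l2o_iterates_bounded
    {E : Type*} [NormedAddCommGroup E] [InnerProductSpace ℝ E] [FiniteDimensional ℝ E]
    (T : E → E)
    (havg : ∃ τ ∈ Set.Ioo (0 : ℝ) 1, ∃ Q : E → E,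
      (∀ a b : E, ‖Q a - Q b‖ ≤ ‖a - b‖) ∧ ∀ z : E, T z = (1 - τ) • z + τ • Q z)
    (hfix : ∃ z : E, T z = z)
    (hcoer : Filter.Tendsto (fun z : E => ‖z - T z‖)
      (Filter.comap norm Filter.atTop) Filter.atTop)
    (α : ℝ) (hα0 : 0 ≤ α) (hα1 : α < 1)
    (y x : ℕ → E) (μ : ℕ → ℝ) (hμ : ∀ k, 0 ≤ μ k)
    (hupd : ∀ k : ℕ,
      (‖y k - T (y k)‖ ≤ α * μ k → x (k + 1) = y k) ∧
      (¬ ‖y k - T (y k)‖ ≤ α * μ k → x (k + 1) = T (x k)))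
    (hinf : {k : ℕ | ‖y k - T (y k)‖ ≤ α * μ k}.Infinite)
    (hμ0 : Filter.Tendsto μ Filter.atTop (nhds 0)) :
    ∃ M : ℝ, ∀ k : ℕ, ‖x k‖ ≤ M := by

  obtain ⟨τ, hτ, Q, hQ, hT⟩ := havg
  obtain ⟨z, hz⟩ := hfix
  -- T is nonexpansive
  have hne : ∀ a b : E, ‖T a - T b‖ ≤ ‖a - b‖ := by
    intro a b
    have hd : T a - T b = (1 - τ) • (a - b) + τ • (Q a - Q b) := by
      rw [hT, hT, smul_sub, smul_sub]; abel
    rw [hd]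
    calc ‖(1-τ) • (a-b) + τ • (Q a - Q b)‖
        ≤ ‖(1-τ) • (a-b)‖ + ‖τ • (Q a - Q b)‖ := norm_add_le _ _
      _ = (1-τ) * ‖a-b‖ + τ * ‖Q a - Q b‖ := by
          rw [norm_smul, norm_smul, Real.norm_of_nonneg (by linarith [hτ.2]),
            Real.norm_of_nonneg hτ.1.le]
      _ ≤ (1-τ) * ‖a-b‖ + τ * ‖a-b‖ := by nlinarith [hQ a b, hτ.1]
      _ = ‖a-b‖ := by ring
  -- bound μ
  obtain ⟨N, hN⟩ := Metric.tendsto_atTop.mp hμ0 1 one_pos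
  set B : ℝ := 1 + ∑ i ∈ Finset.range N, μ i with hBdef
  have hB : ∀ k, μ k ≤ B := by
    intro k
    rcases lt_or_ge k N with h | h
    · have h1 : μ k ≤ ∑ i ∈ Finset.range N, μ i :=
        Finset.single_le_sum (fun i _ => hμ i) (Finset.mem_range.mpr h)
      linarith
    · have := hN k h
      rw [Real.dist_eq, sub_zero, abs_of_nonneg (hμ k)] at this
      have hs : (0:ℝ) ≤ ∑ i ∈ Finset.range N, μ i :=
        Finset.sum_nonneg (fun i _ => hμ i)
      linarith
  set C : ℝ := α * B with hCdef
  -- coercivity extraction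
  have h1 : ∀ᶠ w in Filter.comap norm Filter.atTop, C + 1 ≤ ‖w - T w‖ :=
    hcoer.eventually_ge_atTop (C + 1)
  rw [Filter.eventually_comap] at h1
  obtain ⟨R, hR⟩ := Filter.eventually_atTop.mp h1
  have hRw : ∀ w : E, R ≤ ‖w‖ → C + 1 ≤ ‖w - T w‖ := fun w h => hR ‖w‖ h w rfl
  -- main induction
  have key : ∀ k, ‖x k - z‖ ≤ max ‖x 0 - z‖ (|R| + ‖z‖) := by
    intro k
    induction k with
    | zero => exact le_max_left _ _
    | succ n ih =>
      by_cases h : ‖y n - T (y n)‖ ≤ α * μ n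
      · rw [(hupd n).1 h]
        have hy : ‖y n‖ < R := by
          by_contra hc
          push_neg at hc
          have h2 := hRw (y n) hc
          have h3 : α * μ n ≤ C := mul_le_mul_of_nonneg_left (hB n) hα0
          linarith
        refine le_trans (norm_sub_le _ _) (le_max_of_le_right ?_)
        have : ‖y n‖ ≤ |R| := hy.le.trans (le_abs_self R)
        linarith
      · rw [(hupd n).2 h]
        calc ‖T (x n) - z‖ = ‖T (x n) - T z‖ := by rw [hz]
          _ ≤ ‖x n - z‖ := hne _ _
          _ ≤ _ := ih
  refine ⟨max ‖x 0 - z‖ (|R| + ‖z‖) + ‖z‖, fun k => ?_⟩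
  calc ‖x k‖ = ‖x k - z + z‖ := by rw [sub_add_cancel]
    _ ≤ ‖x k - z‖ + ‖z‖ := norm_add_le _ _
    _ ≤ _ := by linarith [key k]
end

section
/- Existence of a fixed-point cluster point: Let T : E → E be averaged with Fix(T) ≠ ∅ and Id − T coercive. Fix α ∈ [0,1), sequences {y^k} ⊆ E, {x^k} ⊆ E and nonnegative reals {μ_k} with x^{k+1} = y^k if ‖y^k − T(y^k)‖ ≤ α μ_k and x^{k+1} = T(x^k) otherwise. If the inequality ‖y^k − T(y^k)‖ ≤ α μ_k holds for infinitely many k and μ_k → 0, then {x^k} has a subsequence converging to some point p ∈ Fix(T). -/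
/-- **Existence of a fixed-point cluster point for Safe-L2O.** Under the Safe-L2O
hypotheses, if the acceptance inequality holds infinitely often and `μ_k → 0`, then
`{x^k}` has a subsequence converging to some point `p ∈ Fix T`. -/
theorem safe_l2o_cluster_point_in_fix
    {E : Type*} [NormedAddCommGroup E] [InnerProductSpace ℝ E] [FiniteDimensional ℝ E]
    (T : E → E)
    (havg : ∃ τ ∈ Set.Ioo (0 : ℝ) 1, ∃ Q : E → E,
      (∀ a b : E, ‖Q a - Q b‖ ≤ ‖a - b‖) ∧ ∀ z : E, T z = (1 - τ) • z + τ • Q z)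
    (hfix : ∃ z : E, T z = z)
    (hcoer : Filter.Tendsto (fun z : E => ‖z - T z‖)
      (Filter.comap norm Filter.atTop) Filter.atTop)
    (α : ℝ) (hα0 : 0 ≤ α) (hα1 : α < 1)
    (y x : ℕ → E) (μ : ℕ → ℝ) (hμ : ∀ k, 0 ≤ μ k)
    (hupd : ∀ k : ℕ,
      (‖y k - T (y k)‖ ≤ α * μ k → x (k + 1) = y k) ∧
      (¬ ‖y k - T (y k)‖ ≤ α * μ k → x (k + 1) = T (x k)))
    (hinf : {k : ℕ | ‖y k - T (y k)‖ ≤ α * μ k}.Infinite)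
    (hμ0 : Filter.Tendsto μ Filter.atTop (nhds 0)) :
    ∃ p : E, T p = p ∧ ∃ φ : ℕ → ℕ, StrictMono φ ∧
      Filter.Tendsto (x ∘ φ) Filter.atTop (nhds p) := by
  -- T is continuous (nonexpansive).
  obtain ⟨τ, hτ, Q, hQ, hT⟩ := havg
  have hTne : ∀ a b : E, ‖T a - T b‖ ≤ ‖a - b‖ := by
    intro a b
    have : T a - T b = (1 - τ) • (a - b) + τ • (Q a - Q b) := by
      rw [hT a, hT b]; module
    calc ‖T a - T b‖ ≤ ‖(1 - τ) • (a - b)‖ + ‖τ • (Q a - Q b)‖ := by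
          rw [this]; exact norm_add_le _ _
      _ = (1 - τ) * ‖a - b‖ + τ * ‖Q a - Q b‖ := by
          rw [norm_smul, norm_smul, Real.norm_eq_abs, Real.norm_eq_abs,
            abs_of_nonneg (by linarith [hτ.2]), abs_of_nonneg (le_of_lt hτ.1)]
      _ ≤ (1 - τ) * ‖a - b‖ + τ * ‖a - b‖ := by
          nlinarith [hQ a b, hτ.1]
      _ = ‖a - b‖ := by ring
  have hTcont : Continuous T :=
    (LipschitzWith.of_dist_le_mul (K := 1) (by
      intro a b; rw [dist_eq_norm, dist_eq_norm, NNReal.coe_one, one_mul]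
      exact hTne a b)).continuous
  -- Enumerate the accepted indices.
  set P : ℕ → Prop := fun k => ‖y k - T (y k)‖ ≤ α * μ k with hP
  have hinf' : (setOf P).Infinite := hinf
  set ψ : ℕ → ℕ := Nat.nth P with hψ
  have hψmono : StrictMono ψ := Nat.nth_strictMono hinf'
  have hψmem : ∀ k, P (ψ k) := fun k => Nat.nth_mem_of_infinite hinf' k
  set u : ℕ → E := fun k => x (ψ k + 1) with hu
  have huy : ∀ k, u k = y (ψ k) := fun k => (hupd (ψ k)).1 (hψmem k)
  have hule : ∀ k, ‖u k - T (u k)‖ ≤ α * μ (ψ k) := by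
    intro k; rw [huy k]; exact hψmem k
  -- α * μ (ψ k) → 0
  have hμψ : Filter.Tendsto (fun k => α * μ (ψ k)) Filter.atTop (nhds 0) := by
    have := (hμ0.comp hψmono.tendsto_atTop).const_mul α
    simpa using this
  -- u is bounded
  obtain ⟨M, hM⟩ := hμψ.bddAbove_range
  have hMmem : ∀ k, α * μ (ψ k) ≤ M := fun k => hM (Set.mem_range_self k)
  have hev : ∀ᶠ z in Filter.comap norm Filter.atTop, M < ‖z - T z‖ :=
    hcoer.eventually (Filter.eventually_gt_atTop M)
  rw [Filter.eventually_comap] at hev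
  obtain ⟨R, hR⟩ := Filter.eventually_atTop.mp hev
  have hub : ∀ k, ‖u k‖ ≤ R := by
    intro k
    by_contra h
    have := hR ‖u k‖ (le_of_lt (lt_of_not_ge h)) (u k) rfl
    exact absurd ((hule k).trans (hMmem k)) (not_le.mpr this)
  -- extract convergent subsequence
  obtain ⟨p, -, φ', hφ', hconv⟩ :=
    tendsto_subseq_of_bounded (Metric.isBounded_closedBall (x := (0 : E)) (r := R))
      (fun n => by simpa [Metric.mem_closedBall, dist_eq_norm] using hub n)
  -- p is a fixed point
  have h1 : Filter.Tendsto (fun k => ‖(u ∘ φ') k - T ((u ∘ φ') k)‖) Filter.atTop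
      (nhds ‖p - T p‖) := by
    exact ((hconv.sub (hTcont.continuousAt.tendsto.comp hconv)).norm)
  have h2 : Filter.Tendsto (fun k => ‖(u ∘ φ') k - T ((u ∘ φ') k)‖) Filter.atTop
      (nhds 0) := by
    refine squeeze_zero (fun k => norm_nonneg _) (fun k => hule (φ' k)) ?_
    exact hμψ.comp hφ'.tendsto_atTop
  have hp0 : ‖p - T p‖ = 0 := tendsto_nhds_unique h1 h2
  have hpfix : T p = p := by
    have : p - T p = 0 := norm_eq_zero.mp hp0
    have := sub_eq_zero.mp this
    exact this.symm
  refine ⟨p, hpfix, fun k => ψ (φ' k) + 1, ?_, ?_⟩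
  · intro a b hab
    simpa using Nat.add_lt_add_right (hψmono (hφ' hab)) 1
  · exact hconv
end
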